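/- arXiv:1412.5745 — 3 statements merged into one kernel-verified Lean document; each statement's English description precedes it below -/
import Mathlib

section
/- In the Mycielskian μ(G) of a connected graph G, for any two original vertices v_i, v_j with d_G(v_i, v_j) ≤ 3, the distance in μ(G) satisfies d_μ(v_i, v_j) = d_G(v_i, v_j); and if d_G(v_i, v_j) ≥ 4 then d_μ(v_i, v_j) = 4. -/
open SimpleGraph

/-- The Mycielskian of a graph `G`. Vertex `none` is the apex `x`,
`some (Sum.inl v)` is the original vertex `v`, and `some (Sum.inr v)` is the copy `x_v`. -/
def mycielskian {V : Type*} (G : SimpleGraph V) : SimpleGraph (Option (V ⊕ V)) where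
  Adj a b :=
    match a, b with
    | some (Sum.inl v), some (Sum.inl w) => G.Adj v w
    | some (Sum.inl v), some (Sum.inr w) => G.Adj v w
    | some (Sum.inr v), some (Sum.inl w) => G.Adj v w
    | some (Sum.inr _), none => True
    | none, some (Sum.inr _) => True
    | _, _ => False
  symm := by
    constructor
    rintro (_ | (a | a)) (_ | (b | b)) h <;> simp_all <;> exact G.symm.symm _ _ h
  loopless := by
    constructor
    rintro (_ | (a | a)) h <;> simp_all

instance {V : Type*} (G : SimpleGraph V) [DecidableRel G.Adj] :
    DecidableRel (mycielskian G).Adj := fun a b =>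
  match a, b with
  | some (Sum.inl v), some (Sum.inl w) => inferInstanceAs (Decidable (G.Adj v w))
  | some (Sum.inl v), some (Sum.inr w) => inferInstanceAs (Decidable (G.Adj v w))
  | some (Sum.inr v), some (Sum.inl w) => inferInstanceAs (Decidable (G.Adj v w))
  | some (Sum.inr _), none => inferInstanceAs (Decidable True)
  | none, some (Sum.inr _) => inferInstanceAs (Decidable True)
  | none, none => inferInstanceAs (Decidable False)
  | none, some (Sum.inl _) => inferInstanceAs (Decidable False)
  | some (Sum.inl _), none => inferInstanceAs (Decidable False)
  | some (Sum.inr _), some (Sum.inr _) => inferInstanceAs (Decidable False)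

/-! A walk in `μ(G)` between original vertices either avoids the apex `x`, and then folding
`x_v ↦ v` turns it into a walk of the same length in `G`, or it passes through `x`, which is at
distance `2` from every original vertex, and then it has length at least `4`. Conversely `G`
embeds in `μ(G)`, and `v_i x_a x x_b v_j` is a walk of length `4` as soon as `v_i ~ v_a` and
`v_j ~ v_b`. -/

lemma SimpleGraph.Reachable.dist_map_le {V W : Type*} {G : SimpleGraph V} {H : SimpleGraph W}
    (f : G →g H) {u v : V} (h : G.Reachable u v) : H.dist (f u) (f v) ≤ G.dist u v := by
  obtain ⟨p, hp⟩ := h.exists_walk_length_eq_dist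
  simpa [hp] using H.dist_le (p.map f)

lemma SimpleGraph.Walk.length_induce {V : Type*} {G : SimpleGraph V} {s : Set V} {u v : V}
    (w : G.Walk u v) (hw : ∀ x ∈ w.support, x ∈ s) : (w.induce s hw).length = w.length := by
  have h := congrArg Walk.length (w.map_induce hw)
  rwa [Walk.length_map] at h

namespace mycielskian

variable {V : Type*} {G : SimpleGraph V}

variable (G) in
def inlHom : G →g mycielskian G where
  toFun v := some (Sum.inl v)
  map_rel' h := h

variable (G) in
def foldHom : (mycielskian G).induce {x | x.isSome} →g G where
  toFun x := Sum.elim id id (x.1.get x.2)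
  map_rel' := by
    rintro ⟨(_ | a | a), ⟨⟩⟩ ⟨(_ | b | b), ⟨⟩⟩ h
    all_goals first | exact h | exact h.elim

lemma dist_le_length_of_apex_not_mem_support {i j : V}
    (w : (mycielskian G).Walk (some (Sum.inl i)) (some (Sum.inl j))) (hw : none ∉ w.support) :
    G.dist i j ≤ w.length := by
  have hs : ∀ x ∈ w.support, x ∈ {x : Option (V ⊕ V) | x.isSome} := by
    rintro (_ | x) hx
    exacts [absurd hx hw, rfl]
  have h := G.dist_le ((w.induce _ hs).map (foldHom G))
  rw [Walk.length_map, Walk.length_induce] at h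
  exact h

lemma two_le_length_of_walk_to_apex {v : V} (w : (mycielskian G).Walk (some (Sum.inl v)) none) :
    2 ≤ w.length := by
  rcases w with _ | ⟨h, _ | _⟩
  · exact h.elim
  · simp

lemma min_dist_four_le_length {i j : V}
    (w : (mycielskian G).Walk (some (Sum.inl i)) (some (Sum.inl j))) :
    min (G.dist i j) 4 ≤ w.length := by
  classical
  by_cases hw : none ∈ w.support
  · have hsplit : (w.takeUntil none hw).length + (w.dropUntil none hw).length = w.length := by
      rw [← Walk.length_append, w.take_spec hw]
    have h₁ := two_le_length_of_walk_to_apex (w.takeUntil none hw)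
    have h₂ := two_le_length_of_walk_to_apex (w.dropUntil none hw).reverse
    rw [Walk.length_reverse] at h₂
    omega
  · exact min_le_of_left_le (dist_le_length_of_apex_not_mem_support w hw)

lemma min_dist_four_le_dist {i j : V} (h : G.Reachable i j) :
    min (G.dist i j) 4 ≤ (mycielskian G).dist (some (Sum.inl i)) (some (Sum.inl j)) := by
  obtain ⟨w, hw⟩ := (h.map (inlHom G)).exists_walk_length_eq_dist
  exact hw ▸ min_dist_four_le_length w

lemma dist_inl_inl_le_four {i j a b : V} (ha : G.Adj i a) (hb : G.Adj j b) :
    (mycielskian G).dist (some (Sum.inl i)) (some (Sum.inl j)) ≤ 4 := by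
  let w : (mycielskian G).Walk (some (Sum.inl i)) (some (Sum.inl j)) :=
    .cons (v := some (Sum.inr a)) ha <| .cons (v := none) trivial <|
      .cons (v := some (Sum.inr b)) trivial <| .cons (v := some (Sum.inl j)) hb.symm .nil
  exact (mycielskian G).dist_le w

end mycielskian

theorem stmt3 {V : Type*} (G : SimpleGraph V) (hG : G.Connected) :
    ∀ i j : V,
      (G.dist i j ≤ 3 →
        (mycielskian G).dist (some (Sum.inl i)) (some (Sum.inl j)) = G.dist i j) ∧
      (4 ≤ G.dist i j →
        (mycielskian G).dist (some (Sum.inl i)) (some (Sum.inl j)) = 4) := by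
  intro i j
  have hlow := mycielskian.min_dist_four_le_dist (hG i j)
  refine ⟨fun h₃ => le_antisymm ((hG i j).dist_map_le (mycielskian.inlHom G)) (by omega),
    fun h₄ => le_antisymm ?_ (by omega)⟩
  have hne : i ≠ j := by
    rintro rfl
    simp at h₄
  have : Nontrivial V := nontrivial_of_ne i j hne
  obtain ⟨a, ha⟩ := hG.preconnected.exists_adj_of_nontrivial i
  obtain ⟨b, hb⟩ := hG.preconnected.exists_adj_of_nontrivial j
  exact mycielskian.dist_inl_inl_le_four ha hb
end

section
/- Let G be a graph on n vertices with m edges whose minimum degree δ is at least 1, and let μ be its Mycielskian. Then the contribution of the edges between copy vertices and original vertices to the Randić index satisfies Σ_{x_i v_j ∈ E(μ)} 1/√(deg_μ(x_i)·deg_μ(v_j)) ≤ √2·m / √(δ² + δ), with equality if G is regular. -/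
open SimpleGraph

/-! Every degree of `G` is at least `δ`, so each of the `2m` summands is at most
`1 / √((1 + δ) · 2δ)`, and `2 / √((1 + δ) · 2δ) = √2 / √(δ² + δ)`. For a regular graph every
summand equals that bound. -/

open Finset in
lemma sum_sum_ite_adj_const {V : Type*} [Fintype V] (G : SimpleGraph V) [DecidableRel G.Adj]
    {R : Type*} [Semiring R] (c : R) :
    (∑ i : V, ∑ j : V, if G.Adj i j then c else 0) = 2 * #G.edgeFinset * c := by
  classical
  have row (i : V) : (∑ j : V, if G.Adj i j then c else 0) = G.degree i * c := by
    rw [← sum_filter, sum_const, ← neighborFinset_eq_filter, card_neighborFinset_eq_degree,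
      nsmul_eq_mul]
  simp only [row, ← sum_mul]
  exact_mod_cast congrArg (fun n : ℕ => (n : R) * c) (G.sum_degrees_eq_twice_card_edges)

lemma one_div_sqrt_one_add_mul_two_mul_le {δ a b : ℝ} (hδ : 0 < δ) (ha : δ ≤ a) (hb : δ ≤ b) :
    1 / √((1 + a) * (2 * b)) ≤ 1 / √((1 + δ) * (2 * δ)) := by
  gcongr
  linarith

lemma sqrt_two_mul_div_sqrt_sq_add_self (c x : ℝ) :
    √2 * c / √(x ^ 2 + x) = 2 * c * (1 / √((1 + x) * (2 * x))) := by
  have hprod : (1 + x) * (2 * x) = 2 * (x ^ 2 + x) := by ring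
  have htwo : (2 : ℝ) = √2 * √2 := (Real.mul_self_sqrt zero_le_two).symm
  rw [hprod, Real.sqrt_mul zero_le_two]
  nth_rewrite 2 [htwo]
  field_simp

lemma SimpleGraph.IsRegularOfDegree.degree_eq_minDegree {V : Type*} [Fintype V]
    {G : SimpleGraph V} [DecidableRel G.Adj] {k : ℕ} (hG : G.IsRegularOfDegree k) (v : V) :
    G.degree v = G.minDegree := by
  have : Nonempty V := ⟨v⟩
  rw [hG.minDegree_eq, hG.degree_eq]

theorem stmt9_general {V : Type*} [Fintype V] (G : SimpleGraph V) [DecidableRel G.Adj]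
    (hδ : 1 ≤ G.minDegree) :
    (∑ i : V, ∑ j : V, if G.Adj i j then
        1 / Real.sqrt ((1 + (G.degree i : ℝ)) * (2 * G.degree j)) else 0)
      ≤ Real.sqrt 2 * G.edgeFinset.card /
          Real.sqrt ((G.minDegree : ℝ) ^ 2 + G.minDegree) ∧
    (∀ k : ℕ, G.IsRegularOfDegree k →
      (∑ i : V, ∑ j : V, if G.Adj i j then
          1 / Real.sqrt ((1 + (G.degree i : ℝ)) * (2 * G.degree j)) else 0)
        = Real.sqrt 2 * G.edgeFinset.card /
            Real.sqrt ((G.minDegree : ℝ) ^ 2 + G.minDegree)) := by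
  have hδpos : (0 : ℝ) < G.minDegree := by exact_mod_cast hδ
  rw [sqrt_two_mul_div_sqrt_sq_add_self, ← sum_sum_ite_adj_const]
  constructor
  · gcongr with i _ j _
    split_ifs
    · exact one_div_sqrt_one_add_mul_two_mul_le hδpos
        (mod_cast G.minDegree_le_degree i) (mod_cast G.minDegree_le_degree j)
    · rfl
  · intro k hG
    simp only [hG.degree_eq_minDegree]

theorem stmt9 {V : Type*} [Fintype V] [DecidableEq V] (G : SimpleGraph V) [DecidableRel G.Adj]
    (hδ : 1 ≤ G.minDegree) :
    (∑ i : V, ∑ j : V, if G.Adj i j then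
        1 / Real.sqrt ((1 + (G.degree i : ℝ)) * (2 * G.degree j)) else 0)
      ≤ Real.sqrt 2 * G.edgeFinset.card /
          Real.sqrt ((G.minDegree : ℝ) ^ 2 + G.minDegree) ∧
    (∀ k : ℕ, G.IsRegularOfDegree k →
      (∑ i : V, ∑ j : V, if G.Adj i j then
          1 / Real.sqrt ((1 + (G.degree i : ℝ)) * (2 * G.degree j)) else 0)
        = Real.sqrt 2 * G.edgeFinset.card /
            Real.sqrt ((G.minDegree : ℝ) ^ 2 + G.minDegree)) :=
  stmt9_general G hδ
end

section
/- If G is a k-regular graph on n vertices (k ≥ 1) with m = nk/2 edges and μ is its Mycielskian, then R(μ) = m/(2k) + 2m/√(2k(k+1)) + n/√(n(k+1)), equivalently R(μ) = n/4 + √2·m/√(k²+k) + √(n/(k+1)). -/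
open SimpleGraph

section degrees
variable {V : Type*} [Fintype V] [DecidableEq V] (G : SimpleGraph V) [DecidableRel G.Adj]

@[simp] lemma myc_adj (a b : Option (V ⊕ V)) : (mycielskian G).Adj a b ↔
    match a, b with
    | some (Sum.inl v), some (Sum.inl w) => G.Adj v w
    | some (Sum.inl v), some (Sum.inr w) => G.Adj v w
    | some (Sum.inr v), some (Sum.inl w) => G.Adj v w
    | some (Sum.inr _), none => True
    | none, some (Sum.inr _) => True
    | _, _ => False := Iff.rfl

lemma myc_deg_none : (mycielskian G).degree none = Fintype.card V := by
  have h : (mycielskian G).neighborFinset none =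
      Finset.univ.image (fun v : V => (some (Sum.inr v) : Option (V ⊕ V))) := by
    ext a
    rcases a with _ | (v | v) <;> simp [SimpleGraph.mem_neighborFinset]
  rw [SimpleGraph.degree, h, Finset.card_image_of_injective _ (by intro a b h; simpa using h),
    Finset.card_univ]

lemma myc_deg_inl (v : V) : (mycielskian G).degree (some (Sum.inl v)) = 2 * G.degree v := by
  have h : (mycielskian G).neighborFinset (some (Sum.inl v)) =
      (G.neighborFinset v).image (fun w => (some (Sum.inl w) : Option (V ⊕ V)))
      ∪ (G.neighborFinset v).image (fun w => (some (Sum.inr w) : Option (V ⊕ V))) := by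
    ext a
    rcases a with _ | (w | w) <;> simp [SimpleGraph.mem_neighborFinset]
  rw [SimpleGraph.degree, h, Finset.card_union_of_disjoint, Finset.card_image_of_injective _
    (by intro a b h; simpa using h), Finset.card_image_of_injective _
    (by intro a b h; simpa using h), SimpleGraph.degree, two_mul]
  · simp [Finset.disjoint_left]
  
lemma myc_deg_inr (v : V) : (mycielskian G).degree (some (Sum.inr v)) = G.degree v + 1 := by
  have h : (mycielskian G).neighborFinset (some (Sum.inr v)) =
      insert none ((G.neighborFinset v).image (fun w => (some (Sum.inl w) : Option (V ⊕ V)))) := by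
    ext a
    rcases a with _ | (w | w) <;> simp [SimpleGraph.mem_neighborFinset]
  rw [SimpleGraph.degree, h, Finset.card_insert_of_notMem (by simp),
    Finset.card_image_of_injective _ (by intro a b h; simpa using h), SimpleGraph.degree,
    add_comm]

lemma myc_edgeFinset : (mycielskian G).edgeFinset =
    (G.edgeFinset.image (Sym2.map (fun v => (some (Sum.inl v) : Option (V ⊕ V)))))
    ∪ ((Finset.univ : Finset G.Dart).image
        (fun d => s((some (Sum.inl d.fst) : Option (V ⊕ V)), some (Sum.inr d.snd))))
    ∪ (Finset.univ.image (fun v : V => s((none : Option (V ⊕ V)), some (Sum.inr v)))) := by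
  ext e
  induction e with
  | _ a b =>
    simp only [Finset.mem_union, Finset.mem_image, SimpleGraph.mem_edgeFinset,
      SimpleGraph.mem_edgeSet, Finset.mem_univ, true_and, Sym2.exists, Sym2.map_pair_eq,
      Sym2.eq_iff]
    constructor
    · rcases a with _ | (v | v) <;> rcases b with _ | (w | w) <;> intro h <;>
        simp only [myc_adj] at h
      · exact Or.inr ⟨w, Or.inl ⟨rfl, rfl⟩⟩
      · exact Or.inl (Or.inl ⟨v, w, h, Or.inl ⟨rfl, rfl⟩⟩)
      · exact Or.inl (Or.inr ⟨⟨(v, w), h⟩, Or.inl ⟨rfl, rfl⟩⟩)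
      · exact Or.inr ⟨v, Or.inr ⟨rfl, rfl⟩⟩
      · exact Or.inl (Or.inr ⟨⟨(w, v), G.adj_symm h⟩, Or.inr ⟨rfl, rfl⟩⟩)
    · rintro ((⟨x, y, hxy, (⟨rfl, rfl⟩ | ⟨rfl, rfl⟩)⟩ | ⟨d, (⟨h1, h2⟩ | ⟨h1, h2⟩)⟩) |
        ⟨x, (⟨h1, h2⟩ | ⟨h1, h2⟩)⟩) <;>
        try subst h1
      all_goals try subst h2
      · exact hxy
      · exact G.adj_symm hxy
      · exact d.adj
      · exact G.adj_symm d.adj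
      · trivial
      · trivial

end degrees

/-- The Randic index of a graph. -/
noncomputable def randic {W : Type*} [Fintype W] [DecidableEq W] (H : SimpleGraph W)
    [DecidableRel H.Adj] : ℝ :=
  ∑ e ∈ H.edgeFinset,
    Sym2.lift ⟨fun a b => 1 / Real.sqrt ((H.degree a : ℝ) * H.degree b),
      fun a b => by dsimp only; rw [mul_comm]⟩ e

theorem stmt13 {V : Type*} [Fintype V] [DecidableEq V] (G : SimpleGraph V) [DecidableRel G.Adj]
    (k : ℕ) (hk : 1 ≤ k) (hreg : G.IsRegularOfDegree k) :
    randic (mycielskian G) = (Fintype.card V : ℝ) / 4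
      + Real.sqrt 2 * G.edgeFinset.card / Real.sqrt ((k : ℝ) ^ 2 + k)
      + Real.sqrt ((Fintype.card V : ℝ) / (k + 1)) := by
  classical
  set n := Fintype.card V with hn
  set m := G.edgeFinset.card with hm
  set F : Sym2 (Option (V ⊕ V)) → ℝ := Sym2.lift
    ⟨fun a b => 1 / Real.sqrt (((mycielskian G).degree a : ℝ) * (mycielskian G).degree b),
      fun a b => by dsimp only; rw [mul_comm]⟩ with hF
  have hnk : n * k = 2 * m := by
    rw [hn, hm, ← G.sum_degrees_eq_twice_card_edges]
    simp [hreg _, mul_comm]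
  -- the three pieces
  set A := G.edgeFinset.image (Sym2.map (fun v => (some (Sum.inl v) : Option (V ⊕ V)))) with hA
  set B := (Finset.univ : Finset G.Dart).image
      (fun d => s((some (Sum.inl d.fst) : Option (V ⊕ V)), some (Sum.inr d.snd))) with hB
  set C := Finset.univ.image (fun v : V => s((none : Option (V ⊕ V)), some (Sum.inr v))) with hC
  have hAB : Disjoint A B := by
    rw [Finset.disjoint_left]
    rintro e he1 he2
    simp only [hA, hB, Finset.mem_image, Sym2.exists, Sym2.map_pair_eq] at he1 he2
    obtain ⟨x, y, -, rfl⟩ := he1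
    obtain ⟨d, -, hd⟩ := he2
    rw [Sym2.eq_iff] at hd
    rcases hd with ⟨-, h⟩ | ⟨-, h⟩ <;> simp at h
  have hABC : Disjoint (A ∪ B) C := by
    rw [Finset.disjoint_left]
    rintro e he1 he2
    simp only [hC, Finset.mem_image] at he2
    obtain ⟨v, -, rfl⟩ := he2
    simp only [hA, hB, Finset.mem_union, Finset.mem_image, Sym2.exists, Sym2.map_pair_eq] at he1
    rcases he1 with ⟨x, y, -, hd⟩ | ⟨d, -, hd⟩ <;> rw [Sym2.eq_iff] at hd <;>
      rcases hd with ⟨h, -⟩ | ⟨-, h⟩ <;> simp at h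
  have hsum : randic (mycielskian G) = ∑ e ∈ A, F e + ∑ e ∈ B, F e + ∑ e ∈ C, F e := by
    rw [randic, myc_edgeFinset, Finset.sum_union hABC, Finset.sum_union hAB]
  have hdegl : ∀ v : V, ((mycielskian G).degree (some (Sum.inl v)) : ℝ) = 2 * k := by
    intro v; rw [myc_deg_inl, hreg v]; push_cast; ring
  have hdegr : ∀ v : V, ((mycielskian G).degree (some (Sum.inr v)) : ℝ) = k + 1 := by
    intro v; rw [myc_deg_inr, hreg v]; push_cast; ring
  have hdegn : ((mycielskian G).degree (none : Option (V ⊕ V)) : ℝ) = n := by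
    rw [myc_deg_none]
  have hcellA : ∀ e ∈ G.edgeFinset,
      F (Sym2.map (fun v => (some (Sum.inl v) : Option (V ⊕ V))) e)
        = 1 / Real.sqrt ((2 * (k:ℝ)) * (2 * k)) := by
    intro e he
    induction e with
    | _ x y => simp only [hF, Sym2.map_pair_eq, Sym2.lift_mk, hdegl]
  have hSA : ∑ e ∈ A, F e = m * (1 / Real.sqrt ((2 * (k:ℝ)) * (2 * k))) := by
    rw [hA, Finset.sum_image (fun a _ b _ h =>
      Sym2.map.injective (fun a b h => by simpa using h) h),
      Finset.sum_eq_card_nsmul hcellA, ← hm, nsmul_eq_mul]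
  have hcellB : ∀ d : G.Dart,
      F s((some (Sum.inl d.fst) : Option (V ⊕ V)), some (Sum.inr d.snd))
        = 1 / Real.sqrt ((2 * (k:ℝ)) * (k + 1)) := fun d => by
    simp only [hF, Sym2.lift_mk, hdegl, hdegr]
  have hSB : ∑ e ∈ B, F e = (2 * (m:ℝ)) * (1 / Real.sqrt ((2 * (k:ℝ)) * (k + 1))) := by
    rw [hB, Finset.sum_image (fun a _ b _ h => ?_),
      Finset.sum_eq_card_nsmul (fun d _ => hcellB d), Finset.card_univ,
      G.dart_card_eq_twice_card_edges, ← hm, nsmul_eq_mul]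
    · push_cast; ring
    · rw [Sym2.eq_iff] at h
      rcases h with ⟨h1, h2⟩ | ⟨h1, h2⟩ <;> simp only [Option.some.injEq, Sum.inl.injEq,
        Sum.inr.injEq] at h1 h2
      · exact SimpleGraph.Dart.ext _ _ (Prod.ext h1 h2)
      · simp at h1
  have hcellC : ∀ v : V,
      F s((none : Option (V ⊕ V)), some (Sum.inr v))
        = 1 / Real.sqrt ((n:ℝ) * (k + 1)) := fun v => by
    simp only [hF, Sym2.lift_mk, hdegn, hdegr]
  have hSC : ∑ e ∈ C, F e = n * (1 / Real.sqrt ((n:ℝ) * (k + 1))) := by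
    rw [hC, Finset.sum_image (fun a _ b _ h => by
      rw [Sym2.eq_iff] at h
      rcases h with ⟨-, h⟩ | ⟨h, -⟩ <;> simpa using h),
      Finset.sum_eq_card_nsmul (fun v _ => hcellC v), Finset.card_univ, ← hn, nsmul_eq_mul]
  rw [hsum, hSA, hSB, hSC]
  have hk0 : (0:ℝ) < k := by exact_mod_cast hk
  have hnk' : (n : ℝ) * k = 2 * m := by exact_mod_cast hnk
  have h1 : (m : ℝ) * (1 / Real.sqrt ((2 * k) * (2 * k))) = n / 4 := by
    rw [Real.sqrt_mul_self (by positivity)]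
    field_simp
    linarith
  have h2 : ((2 : ℝ) * m) * (1 / Real.sqrt ((2 * k) * (k + 1))) =
      Real.sqrt 2 * m / Real.sqrt ((k : ℝ) ^ 2 + k) := by
    have : (2 * (k:ℝ)) * (k + 1) = 2 * ((k:ℝ)^2 + k) := by ring
    rw [this, Real.sqrt_mul (by norm_num), mul_one_div,
      div_eq_div_iff (by positivity) (by positivity)]
    have h2' : Real.sqrt 2 ^ 2 = 2 := Real.sq_sqrt (by norm_num)
    linear_combination (-((m : ℝ) * Real.sqrt ((k:ℝ)^2 + k))) * h2'
  have h3 : (n : ℝ) * (1 / Real.sqrt (n * (k + 1))) =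
      Real.sqrt ((n : ℝ) / (k + 1)) := by
    rw [Real.sqrt_mul (by positivity), Real.sqrt_div (by positivity),
      mul_one_div, ← div_div, Real.div_sqrt]
  rw [h1, h2, h3]
end
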